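/- Dirichlet (Thomson) principle for reversible chains: if Δ is symmetric (Δ^{ij} = Δ^{ji}), then for distinct states a, b, r_{ab} = 1/T_{ab} = min over φ with φ_a = 1, φ_b = 0 of ∑_{ij} φ_i Δ^{ij} φ_j. -/

import Mathlib

/-!
Write `Δ = diag(w) (1 - P)`. Stationarity and stochasticity make the quadratic form
`φ ⬝ Δ φ = ½ ∑ᵢⱼ wᵢ Pᵢⱼ (φᵢ - φⱼ)²` nonnegative, and reversibility makes it symmetric, so `Δ` is
positive semidefinite. The one-step equations for the mean hitting times give
`Δ (M·b - M·a) = e_a - e_b`, hence `φ̄ = (M·b - M·a - (M b b - M b a)) / T a b` is the harmonic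
function with `φ̄ a = 1`, `φ̄ b = 0` and `Δ φ̄ = (e_a - e_b) / T a b`. For any other admissible `φ`
the cross term between `φ̄` and `φ - φ̄` vanishes, so the energy of `φ` exceeds that of `φ̄`,
which is `1 / T a b`, by the nonnegative energy of `φ - φ̄`.
-/

open Matrix Finset

variable {ι : Type*} [Fintype ι] [DecidableEq ι]

lemma dotProduct_single_sub_single {R : Type*} [Ring R] (x : ι → R) (a b : ι) :
    x ⬝ᵥ (Pi.single a 1 - Pi.single b 1) = x a - x b := by
  simp [dotProduct_sub]

namespace Matrix.PosSemidef

variable {Δ : Matrix ι ι ℝ}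

omit [DecidableEq ι] in
lemma dotProduct_mulVec_comm (hΔ : Δ.PosSemidef) (x y : ι → ℝ) :
    x ⬝ᵥ Δ *ᵥ y = y ⬝ᵥ Δ *ᵥ x := by
  have hT : Δᵀ = Δ := by simpa [conjTranspose_eq_transpose_of_trivial] using hΔ.1.eq
  rw [dotProduct_mulVec, ← mulVec_transpose, hT, dotProduct_comm]

theorem isLeast_energy (hΔ : Δ.PosSemidef) {ψ : ι → ℝ} {a b : ι} (ha : ψ a = 1) (hb : ψ b = 0)
    {κ : ℝ} (hψ : Δ *ᵥ ψ = κ • (Pi.single a 1 - Pi.single b 1)) :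
    IsLeast {v | ∃ φ : ι → ℝ, φ a = 1 ∧ φ b = 0 ∧ v = φ ⬝ᵥ Δ *ᵥ φ} κ := by
  have pairing : ∀ x, x ⬝ᵥ Δ *ᵥ ψ = κ * (x a - x b) := fun x => by
    rw [hψ, dotProduct_smul, dotProduct_single_sub_single, smul_eq_mul]
  refine ⟨⟨ψ, ha, hb, by rw [pairing, ha, hb]; ring⟩, ?_⟩
  rintro _ ⟨φ, hφa, hφb, rfl⟩
  obtain ⟨η, rfl⟩ : ∃ η, φ = ψ + η := ⟨φ - ψ, by abel⟩
  have hη : η ⬝ᵥ Δ *ᵥ ψ = 0 := by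
    rw [pairing]
    simp only [Pi.add_apply, ha, hb] at hφa hφb
    rw [show η a = 0 by linarith, show η b = 0 by linarith, sub_zero, mul_zero]
  have expand : (ψ + η) ⬝ᵥ Δ *ᵥ (ψ + η) = ψ ⬝ᵥ Δ *ᵥ ψ + η ⬝ᵥ Δ *ᵥ η := by
    rw [mulVec_add, dotProduct_add, add_dotProduct, add_dotProduct, hΔ.dotProduct_mulVec_comm ψ η,
      hη]
    ring
  have hψψ : ψ ⬝ᵥ Δ *ᵥ ψ = κ := by rw [pairing, ha, hb]; ring
  have hηη := hΔ.dotProduct_mulVec_nonneg η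
  rw [star_trivial] at hηη
  linarith

theorem sub_pos_of_mulVec_eq (hΔ : Δ.PosSemidef) {u : ι → ℝ} {a b : ι} (hab : a ≠ b)
    (hu : Δ *ᵥ u = Pi.single a 1 - Pi.single b 1) : 0 < u a - u b := by
  have henergy : u ⬝ᵥ Δ *ᵥ u = u a - u b := by rw [hu, dotProduct_single_sub_single]
  have hnonneg := hΔ.dotProduct_mulVec_nonneg u
  rw [star_trivial, henergy] at hnonneg
  refine hnonneg.lt_of_ne fun h => ?_
  have hzero : Δ *ᵥ u = 0 := by
    rw [← hΔ.dotProduct_mulVec_zero_iff, star_trivial, henergy, h]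
  simpa [hab] using congrFun (hu.symm.trans hzero) a

theorem isLeast_energy_of_mulVec_eq (hΔ : Δ.PosSemidef) (hΔ1 : Δ *ᵥ 1 = 0) {u : ι → ℝ}
    {a b : ι} (hab : a ≠ b) (hu : Δ *ᵥ u = Pi.single a 1 - Pi.single b 1) :
    IsLeast {v | ∃ φ : ι → ℝ, φ a = 1 ∧ φ b = 0 ∧ v = φ ⬝ᵥ Δ *ᵥ φ} (1 / (u a - u b)) := by
  have hpos := hΔ.sub_pos_of_mulVec_eq hab hu
  refine hΔ.isLeast_energy (ψ := (u a - u b)⁻¹ • (u - u b • 1)) ?_ ?_ ?_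
  · simp [hpos.ne']
  · simp
  · rw [mulVec_smul, mulVec_sub, mulVec_smul, hΔ1, hu, smul_zero, sub_zero, one_div]

end Matrix.PosSemidef

section Generator

variable {P : Matrix ι ι ℝ} {w : ι → ℝ}

lemma diagonal_mul_one_sub_mulVec (x : ι → ℝ) :
    (diagonal w * (1 - P)) *ᵥ x = w * (x - P *ᵥ x) := by
  ext i
  rw [← mulVec_mulVec, mulVec_diagonal, sub_mulVec, one_mulVec]
  rfl

lemma diagonal_mul_one_sub_mulVec_one (hP : P *ᵥ 1 = 1) :
    (diagonal w * (1 - P)) *ᵥ 1 = 0 := by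
  rw [diagonal_mul_one_sub_mulVec, hP, sub_self, mul_zero]

lemma one_vecMul_diagonal_mul_one_sub (hw : w ᵥ* P = w) :
    1 ᵥ* (diagonal w * (1 - P)) = 0 := by
  have h1 : (1 : ι → ℝ) ᵥ* diagonal w = w := funext fun i => by simp [vecMul_diagonal]
  rw [← vecMul_vecMul, h1, vecMul_sub, vecMul_one, hw, sub_self]

lemma dotProduct_diagonal_mul_one_sub_mulVec (hP : P *ᵥ 1 = 1) (hw : w ᵥ* P = w) (x : ι → ℝ) :
    x ⬝ᵥ (diagonal w * (1 - P)) *ᵥ x = (∑ i, ∑ j, w i * P i j * (x i - x j) ^ 2) / 2 := by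
  have hrow : ∀ f : ι → ℝ, ∑ i, ∑ j, w i * P i j * f i = ∑ i, w i * f i := fun f => by
    refine sum_congr rfl fun i _ => ?_
    simpa [mulVec, dotProduct, mul_sum, mul_comm, mul_left_comm] using
      congrArg (w i * f i * ·) (congrFun hP i)
  have hcol : ∀ f : ι → ℝ, ∑ i, ∑ j, w i * P i j * f j = ∑ j, w j * f j := fun f => by
    rw [sum_comm]
    refine sum_congr rfl fun j _ => ?_
    simpa [vecMul, dotProduct, sum_mul] using congrArg (· * f j) (congrFun hw j)
  have hlhs : x ⬝ᵥ (diagonal w * (1 - P)) *ᵥ x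
      = ∑ i, w i * x i ^ 2 - ∑ i, ∑ j, w i * P i j * (x i * x j) := by
    rw [diagonal_mul_one_sub_mulVec]
    simp only [dotProduct, mulVec, Pi.mul_apply, Pi.sub_apply, mul_sub, sum_sub_distrib, mul_sum]
    congr 1
    · exact sum_congr rfl fun i _ => by ring
    · exact sum_congr rfl fun i _ => sum_congr rfl fun j _ => by ring
  have hsq : ∀ i j, w i * P i j * (x i - x j) ^ 2
      = w i * P i j * x i ^ 2 + w i * P i j * x j ^ 2 - 2 * (w i * P i j * (x i * x j)) :=
    fun i j => by ring
  simp only [hsq, sum_sub_distrib, sum_add_distrib, ← mul_sum, hrow, hcol, hlhs]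
  ring

theorem posSemidef_diagonal_mul_one_sub (hP0 : ∀ i j, 0 ≤ P i j) (hw0 : ∀ i, 0 ≤ w i)
    (hP : P *ᵥ 1 = 1) (hw : w ᵥ* P = w) (hsymm : (diagonal w * (1 - P)).IsHermitian) :
    (diagonal w * (1 - P)).PosSemidef := by
  refine .of_dotProduct_mulVec_nonneg hsymm fun x => ?_
  rw [star_trivial, dotProduct_diagonal_mul_one_sub_mulVec hP hw]
  exact div_nonneg (sum_nonneg fun i _ => sum_nonneg fun j _ =>
    mul_nonneg (mul_nonneg (hw0 i) (hP0 i j)) (sq_nonneg _)) zero_le_two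

theorem diagonal_mul_one_sub_mulVec_hittingTime (hw : w ᵥ* P = w) (hw1 : ∑ i, w i = 1)
    {m : ι → ℝ} {c : ι} (hm : ∀ i, i ≠ c → m i = 1 + (P *ᵥ m) i) :
    (diagonal w * (1 - P)) *ᵥ m = w - Pi.single c 1 := by
  set v := (diagonal w * (1 - P)) *ᵥ m - (w - Pi.single c 1)
  have hoff : ∀ i, i ≠ c → v i = 0 := fun i hi => by
    simp only [v, diagonal_mul_one_sub_mulVec, Pi.sub_apply, Pi.mul_apply, Pi.single_apply, hi,
      if_false, hm i hi]
    ring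
  -- the entry at `c` is forced by the vanishing column sums of the generator
  have hsum : ∑ i, v i = 0 := by
    have h1 : (1 : ι → ℝ) ⬝ᵥ (diagonal w * (1 - P)) *ᵥ m = 0 := by
      rw [dotProduct_mulVec, one_vecMul_diagonal_mul_one_sub hw, zero_dotProduct]
    simp only [v, Pi.sub_apply, sum_sub_distrib, hw1, sum_pi_single', mem_univ, if_true]
    simpa [dotProduct] using h1
  have hc : v c = 0 := by
    rwa [sum_eq_single c (fun i _ hi => hoff i hi) fun h => (h (mem_univ c)).elim] at hsum
  refine sub_eq_zero.1 (funext fun i => ?_)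
  by_cases hi : i = c
  · subst hi; exact hc
  · exact hoff i hi

end Generator

theorem dirichlet_principle_reversible_general {n : ℕ}
    (P : Matrix (Fin n) (Fin n) ℝ)
    (hP0 : ∀ i j, 0 ≤ P i j) (hP1 : ∀ i, ∑ j, P i j = 1)
    (w : Fin n → ℝ)
    (hw1 : ∑ i, w i = 1) (hwpos : ∀ i, 0 < w i)
    (hwP : ∀ j, ∑ i, w i * P i j = w j)
    (Δ : Matrix (Fin n) (Fin n) ℝ)
    (hΔ : ∀ i j, Δ i j = w i * ((if i = j then (1 : ℝ) else 0) - P i j))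
    (hsymm : ∀ i j, Δ i j = Δ j i)
    (M : Fin n → Fin n → ℝ)
    (hMdiag : ∀ b, M b b = 0)
    (hMstep : ∀ a b, a ≠ b → M a b = 1 + ∑ j, P a j * M j b)
    (T : Fin n → Fin n → ℝ)
    (hT : ∀ a b, T a b = M a b + M b a)
    (a b : Fin n) (hab : a ≠ b) :
    IsLeast
      { v : ℝ | ∃ φ : Fin n → ℝ, φ a = 1 ∧ φ b = 0 ∧
          v = ∑ i, ∑ j, φ i * Δ i j * φ j }
      (1 / T a b) := by
  have hgen : Δ = diagonal w * (1 - P) := by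
    ext i j
    simp [hΔ, diagonal_mul, one_apply]
  have hrow : P *ᵥ 1 = 1 := funext fun i => by simpa [mulVec, dotProduct] using hP1 i
  have hstat : w ᵥ* P = w := funext fun j => by simpa [vecMul, dotProduct] using hwP j
  have hPSD : Δ.PosSemidef := hgen ▸ posSemidef_diagonal_mul_one_sub hP0 (fun i => (hwpos i).le)
    hrow hstat (hgen ▸ IsHermitian.ext fun i j => (hsymm i j).symm)
  have hhit : ∀ c, Δ *ᵥ (fun i => M i c) = w - Pi.single c 1 := fun c =>
    hgen ▸ diagonal_mul_one_sub_mulVec_hittingTime hstat hw1 fun i hi => hMstep i c hi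
  have hu : Δ *ᵥ (fun i => M i b - M i a) = Pi.single a 1 - Pi.single b 1 := by
    rw [show (fun i => M i b - M i a) = (fun i => M i b) - fun i => M i a from rfl, mulVec_sub,
      hhit, hhit]
    abel
  have hTab : T a b = (M a b - M a a) - (M b b - M b a) := by rw [hT, hMdiag, hMdiag]; ring
  have henergy : ∀ φ : Fin n → ℝ, ∑ i, ∑ j, φ i * Δ i j * φ j = φ ⬝ᵥ Δ *ᵥ φ := fun φ => by
    simp [dotProduct, mulVec, mul_sum, mul_assoc]
  simp_rw [henergy, hTab]
  exact hPSD.isLeast_energy_of_mulVec_eq (hgen ▸ diagonal_mul_one_sub_mulVec_one hrow) hab hu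

/-- Dirichlet (Thomson) principle for reversible chains: if `Δ` is symmetric
then for `a ≠ b` the commuting rate `1 / T a b` is the minimum of the energy
`∑ᵢⱼ φᵢ Δ^{ij} φⱼ` over `φ` with `φ a = 1`, `φ b = 0`. -/
theorem dirichlet_principle_reversible {n : ℕ}
    (P : Matrix (Fin n) (Fin n) ℝ)
    (hP0 : ∀ i j, 0 ≤ P i j) (hP1 : ∀ i, ∑ j, P i j = 1)
    (herg : ∃ k : ℕ, ∀ i j, 0 < (P ^ k) i j)
    (w : Fin n → ℝ)
    (hw1 : ∑ i, w i = 1) (hwpos : ∀ i, 0 < w i)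
    (hwP : ∀ j, ∑ i, w i * P i j = w j)
    (Δ : Matrix (Fin n) (Fin n) ℝ)
    (hΔ : ∀ i j, Δ i j = w i * ((if i = j then (1 : ℝ) else 0) - P i j))
    (hsymm : ∀ i j, Δ i j = Δ j i)
    (M : Fin n → Fin n → ℝ)
    (hMdiag : ∀ b, M b b = 0)
    (hMstep : ∀ a b, a ≠ b → M a b = 1 + ∑ j, P a j * M j b)
    (T : Fin n → Fin n → ℝ)
    (hT : ∀ a b, T a b = M a b + M b a)
    (a b : Fin n) (hab : a ≠ b) :
    IsLeast
      { v : ℝ | ∃ φ : Fin n → ℝ, φ a = 1 ∧ φ b = 0 ∧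
          v = ∑ i, ∑ j, φ i * Δ i j * φ j }
      (1 / T a b) :=
  dirichlet_principle_reversible_general P hP0 hP1 w hw1 hwpos hwP Δ hΔ hsymm M hMdiag hMstep T hT a
    b hab
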